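/- arXiv:2512.20895 — 3 statements merged into one kernel-verified Lean document; each statement's English description precedes it below -/
import Mathlib

section
/- Let Γ, a > 0 and A₁, A₂ > 0 be constants with q := (Γa)²/(A₁A₂). Define T_m := K_m(A₁)·K_m(A₂)·∫₀ᵃ I_m(Γr)² r dr for integers m ≥ 1. Then T_m ≤ (e^{2Γa}a²/8)·(q^m/m²) for all m ≥ 1; consequently if q < 1 the series Σ_{m≥1} T_m converges absolutely. -/
open Real MeasureTheory

/-- The modified Bessel function of the second kind of integer order `m`,
via its integral representation for `x > 0`. -/
noncomputable def besselK (m : ℕ) (x : ℝ) : ℝ :=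
  Real.sqrt π * (x / 2) ^ m / Real.Gamma ((m : ℝ) + 1 / 2) *
    ∫ t in Set.Ioi (1 : ℝ), Real.exp (-x * t) * (t ^ 2 - 1) ^ ((m : ℝ) - 1 / 2)

/-- The modified Bessel function of the first kind of integer order `m`,
via its power series. -/
noncomputable def besselI (m : ℕ) (x : ℝ) : ℝ :=
  ∑' k : ℕ, (x / 2) ^ (m + 2 * k) / ((k.factorial : ℝ) * (m + k).factorial)

/-!
Both Bessel functions are bounded term by term. In the power series of `I_m`, the inequality
`m! (2k)! ≤ 4^k k! (m+k)!` (a central binomial coefficient is at most `4^k`) dominates the `k`-th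
term by `(x/2)^m / m!` times the `2k`-th term of the series of `e^x`, so
`I_m(x) ≤ (x/2)^m e^x / m!`. In the integral of `K_m`, `(t² - 1)^(m-1/2) ≤ t^(2m-1)`, and enlarging
the range from `t > 1` to `t > 0` leaves a Gamma integral; with the half-integer values of `Γ` this
gives `K_m(x) ≤ (m-1)! 2^(m-1) / x^m`. The product of the bounds is `e^(2Γa) a² q^m / (8 m²)`, and
for `q < 1` the series is dominated by a geometric one.
-/

open Set
open scoped Nat

theorem Nat.factorial_mul_factorial_two_mul_le (m k : ℕ) :
    m ! * (2 * k)! ≤ 4 ^ k * (k ! * (m + k)!) := by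
  have hcentral : (2 * k)! = k.centralBinom * k ! * k ! := by
    rw [Nat.centralBinom_eq_two_mul_choose, two_mul, Nat.add_choose_mul_factorial_mul_factorial]
  have hsplit : k ! * m ! ≤ (m + k)! := by
    rw [add_comm]
    exact Nat.le_of_dvd (Nat.factorial_pos _) (Nat.factorial_mul_factorial_dvd_factorial_add k m)
  calc m ! * (2 * k)! = k.centralBinom * (k ! * m !) * k ! := by rw [hcentral]; ring
    _ ≤ 4 ^ k * (m + k)! * k ! := by gcongr; exact Nat.centralBinom_le_four_pow k
    _ = 4 ^ k * (k ! * (m + k)!) := by ring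

theorem besselI_term_le (m k : ℕ) {x : ℝ} (hx : 0 ≤ x) :
    (x / 2) ^ (m + 2 * k) / ((k ! : ℝ) * (m + k)!) ≤
      (x / 2) ^ m / m ! * (x ^ (2 * k) / (2 * k)!) := by
  have hfact : ((m ! * (2 * k)! : ℕ) : ℝ) ≤ (4 ^ k * (k ! * (m + k)!) : ℕ) := by
    exact_mod_cast Nat.factorial_mul_factorial_two_mul_le m k
  push_cast at hfact
  calc (x / 2) ^ (m + 2 * k) / ((k ! : ℝ) * (m + k)!)
      = (x / 2) ^ m * x ^ (2 * k) / (4 ^ k * (k ! * (m + k)!)) := by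
        rw [pow_add, div_pow x 2 (2 * k), pow_mul (2 : ℝ)]; ring
    _ ≤ (x / 2) ^ m * x ^ (2 * k) / (m ! * (2 * k)!) := by gcongr
    _ = (x / 2) ^ m / m ! * (x ^ (2 * k) / (2 * k)!) := by ring

theorem besselI_nonneg (m : ℕ) {x : ℝ} (hx : 0 ≤ x) : 0 ≤ besselI m x :=
  tsum_nonneg fun _ => by positivity

theorem besselI_le (m : ℕ) {x : ℝ} (hx : 0 ≤ x) : besselI m x ≤ (x / 2) ^ m / m ! * exp x := by
  have hexp :
      HasSum (fun n : ℕ => (x / 2) ^ m / m ! * (x ^ n / n !)) ((x / 2) ^ m / m ! * exp x) := by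
    rw [Real.exp_eq_exp_ℝ, NormedSpace.exp_eq_tsum_div]
    exact (Real.summable_pow_div_factorial x).hasSum.mul_left _
  have hterms : Summable fun k : ℕ => (x / 2) ^ (m + 2 * k) / ((k ! : ℝ) * (m + k)!) :=
    .of_nonneg_of_le (fun _ => by positivity) (besselI_term_le m · hx)
      (hexp.summable.comp_injective (mul_right_injective₀ two_ne_zero))
  rw [← hexp.tsum_eq]
  exact hterms.tsum_le_tsum_of_inj (2 * ·) (mul_right_injective₀ two_ne_zero)
    (fun _ _ => by positivity) (besselI_term_le m · hx) hexp.summable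

theorem besselK_nonneg (m : ℕ) {x : ℝ} (hx : 0 ≤ x) : 0 ≤ besselK m x := by
  have hintegral : 0 ≤ ∫ t in Ioi (1 : ℝ), exp (-x * t) * (t ^ 2 - 1) ^ ((m : ℝ) - 1 / 2) :=
    setIntegral_nonneg measurableSet_Ioi fun t ht => by
      have : 0 ≤ t ^ 2 - 1 := by nlinarith [mem_Ioi.mp ht]
      positivity
  have := Gamma_pos_of_pos (show (0 : ℝ) < m + 1 / 2 by positivity)
  unfold besselK
  positivity

theorem integral_exp_mul_sq_sub_one_rpow_le {ν x : ℝ} (hν : 1 / 2 ≤ ν) (hx : 0 < x) :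
    ∫ t in Ioi (1 : ℝ), exp (-x * t) * (t ^ 2 - 1) ^ (ν - 1 / 2) ≤
      (1 / x) ^ (2 * ν) * Gamma (2 * ν) := by
  set g : ℝ → ℝ := fun t => t ^ (2 * ν - 1) * exp (-(x * t))
  have hg : IntegrableOn g (Ioi 0) := by
    simpa [g, neg_mul] using integrableOn_rpow_mul_exp_neg_mul_rpow (p := 1) (s := 2 * ν - 1)
      (by linarith) one_pos hx
  have hle : ∀ t ∈ Ioi (1 : ℝ), exp (-x * t) * (t ^ 2 - 1) ^ (ν - 1 / 2) ≤ g t := by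
    intro t ht
    have ht : 1 < t := ht
    calc exp (-x * t) * (t ^ 2 - 1) ^ (ν - 1 / 2) ≤ exp (-x * t) * (t ^ 2) ^ (ν - 1 / 2) := by
          gcongr
          · nlinarith
          · linarith
      _ = g t := by
          rw [← rpow_natCast, ← rpow_mul (by linarith), neg_mul]
          show _ = t ^ (2 * ν - 1) * exp (-(x * t))
          push_cast; ring_nf
  calc ∫ t in Ioi (1 : ℝ), exp (-x * t) * (t ^ 2 - 1) ^ (ν - 1 / 2)
      ≤ ∫ t in Ioi 1, g t := by
        refine integral_mono_of_nonneg ?_ (hg.mono_set (Ioi_subset_Ioi zero_le_one))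
          ((ae_restrict_iff' measurableSet_Ioi).mpr (.of_forall hle))
        refine (ae_restrict_iff' measurableSet_Ioi).mpr (.of_forall fun t ht => ?_)
        have : 0 ≤ t ^ 2 - 1 := by nlinarith [mem_Ioi.mp ht]
        positivity
    _ ≤ ∫ t in Ioi 0, g t :=
        setIntegral_mono_set hg
          ((ae_restrict_iff' measurableSet_Ioi).mpr (.of_forall fun t ht => by
            have : (0 : ℝ) < t := ht
            positivity))
          (Ioi_subset_Ioi zero_le_one).eventuallyLE
    _ = (1 / x) ^ (2 * ν) * Gamma (2 * ν) := integral_rpow_mul_exp_neg_mul_Ioi (by linarith) hx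

theorem besselK_succ_le (n : ℕ) {x : ℝ} (hx : 0 < x) :
    besselK (n + 1) x ≤ n ! * 2 ^ n / x ^ (n + 1) := by
  have hΓhalf : Gamma ((n + 1 : ℕ) + 1 / 2) = (2 * n + 1)‼ * √π / 2 ^ (n + 1) := by
    push_cast; exact Gamma_nat_add_one_add_half n
  have hΓ : Gamma (2 * (n + 1 : ℕ)) = (2 * n + 1)‼ * (2 ^ n * n !) := by
    rw [show (2 * (n + 1 : ℕ) : ℝ) = (2 * n + 1 : ℕ) + 1 by push_cast; ring,
      Gamma_nat_eq_factorial, Nat.factorial_eq_mul_doubleFactorial, Nat.doubleFactorial_two_mul]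
    push_cast; ring
  have hpow : (1 / x) ^ (2 * ((n + 1 : ℕ) : ℝ)) = 1 / x ^ (2 * (n + 1)) := by
    rw [show 2 * ((n + 1 : ℕ) : ℝ) = ((2 * (n + 1) : ℕ) : ℝ) by push_cast; ring, rpow_natCast,
      one_div_pow]
  calc besselK (n + 1) x
      ≤ √π * (x / 2) ^ (n + 1) / Gamma ((n + 1 : ℕ) + 1 / 2) *
          ((1 / x) ^ (2 * ((n + 1 : ℕ) : ℝ)) * Gamma (2 * (n + 1 : ℕ))) := by
        unfold besselK
        have := Gamma_pos_of_pos (show (0 : ℝ) < (n + 1 : ℕ) + 1 / 2 by positivity)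
        gcongr
        refine integral_exp_mul_sq_sub_one_rpow_le ?_ hx
        push_cast
        linarith [(n.cast_nonneg : (0 : ℝ) ≤ n)]
    _ = n ! * 2 ^ n / x ^ (n + 1) := by
        rw [hΓhalf, hΓ, hpow, div_pow]
        field_simp
        ring

theorem integral_mul_id_le_of_le {f : ℝ → ℝ} {a M : ℝ} (ha : 0 ≤ a) (hM : 0 ≤ M)
    (hf : ∀ r ∈ Icc 0 a, f r ≤ M) : ∫ r in (0 : ℝ)..a, f r * r ≤ M * (a ^ 2 / 2) := by
  by_cases hint : IntervalIntegrable (fun r => f r * r) volume 0 a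
  · calc ∫ r in (0 : ℝ)..a, f r * r ≤ ∫ r in (0 : ℝ)..a, M * r :=
          intervalIntegral.integral_mono_on ha hint
            ((continuous_const_mul M).intervalIntegrable 0 a)
            fun r hr => mul_le_mul_of_nonneg_right (hf r hr) hr.1
      _ = M * (a ^ 2 / 2) := by rw [intervalIntegral.integral_const_mul, integral_id]; ring
  · rw [intervalIntegral.integral_undef hint]
    positivity

theorem integral_sq_besselI_mul_le (m : ℕ) {Γ a : ℝ} (hΓ : 0 ≤ Γ) (ha : 0 ≤ a) :
    ∫ r in (0 : ℝ)..a, besselI m (Γ * r) ^ 2 * r ≤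
      ((Γ * a / 2) ^ m / m ! * exp (Γ * a)) ^ 2 * (a ^ 2 / 2) :=
  integral_mul_id_le_of_le ha (sq_nonneg _) fun r hr => by
    have hΓr : 0 ≤ Γ * r := mul_nonneg hΓ hr.1
    have hΓra : Γ * r ≤ Γ * a := mul_le_mul_of_nonneg_left hr.2 hΓ
    gcongr
    · exact besselI_nonneg m hΓr
    · exact (besselI_le m hΓr).trans (by gcongr)

theorem besselK_mul_besselK_mul_integral_sq_besselI_le (n : ℕ) {Γ a A₁ A₂ : ℝ} (hΓ : 0 ≤ Γ)
    (ha : 0 ≤ a) (hA₁ : 0 < A₁) (hA₂ : 0 < A₂) :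
    besselK (n + 1) A₁ * besselK (n + 1) A₂ *
        ∫ r in (0 : ℝ)..a, besselI (n + 1) (Γ * r) ^ 2 * r ≤
      exp (2 * Γ * a) * a ^ 2 / 8 *
        (((Γ * a) ^ 2 / (A₁ * A₂)) ^ (n + 1) / ((n + 1 : ℕ) : ℝ) ^ 2) :=
  calc besselK (n + 1) A₁ * besselK (n + 1) A₂ *
        ∫ r in (0 : ℝ)..a, besselI (n + 1) (Γ * r) ^ 2 * r
      ≤ (n ! * 2 ^ n / A₁ ^ (n + 1)) * (n ! * 2 ^ n / A₂ ^ (n + 1)) *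
          (((Γ * a / 2) ^ (n + 1) / (n + 1)! * exp (Γ * a)) ^ 2 * (a ^ 2 / 2)) :=
        mul_le_mul (mul_le_mul (besselK_succ_le n hA₁) (besselK_succ_le n hA₂)
          (besselK_nonneg _ hA₂.le) (by positivity)) (integral_sq_besselI_mul_le _ hΓ ha)
          (intervalIntegral.integral_nonneg ha fun r hr => mul_nonneg (sq_nonneg _) hr.1)
          (by positivity)
    _ = exp (2 * Γ * a) * a ^ 2 / 8 *
          (((Γ * a) ^ 2 / (A₁ * A₂)) ^ (n + 1) / ((n + 1 : ℕ) : ℝ) ^ 2) := by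
        rw [Nat.factorial_succ, show 2 * Γ * a = Γ * a + Γ * a by ring, exp_add, div_pow, div_pow,
          ← pow_mul, mul_pow A₁]
        push_cast
        field_simp
        ring

theorem T_decay (Γ a A₁ A₂ q : ℝ) (hΓ : 0 < Γ) (ha : 0 < a) (hA₁ : 0 < A₁)
    (hA₂ : 0 < A₂) (hq : q = (Γ * a) ^ 2 / (A₁ * A₂)) (T : ℕ → ℝ)
    (hT : ∀ m : ℕ, T m =
      besselK m A₁ * besselK m A₂ * ∫ r in (0:ℝ)..a, (besselI m (Γ * r)) ^ 2 * r) :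
    (∀ m : ℕ, 1 ≤ m → T m ≤ Real.exp (2 * Γ * a) * a ^ 2 / 8 * (q ^ m / (m : ℝ) ^ 2)) ∧
    (q < 1 → Summable fun m : ℕ => |T (m + 1)|) := by
  have hbound (m : ℕ) (hm : 1 ≤ m) :
      T m ≤ exp (2 * Γ * a) * a ^ 2 / 8 * (q ^ m / (m : ℝ) ^ 2) := by
    obtain ⟨n, rfl⟩ := Nat.exists_eq_add_of_le' hm
    rw [hT, hq]
    exact besselK_mul_besselK_mul_integral_sq_besselI_le n hΓ.le ha.le hA₁ hA₂
  refine ⟨hbound, fun hq1 => ?_⟩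
  have hT_nonneg (m : ℕ) : 0 ≤ T m := by
    rw [hT m]
    exact mul_nonneg (mul_nonneg (besselK_nonneg m hA₁.le) (besselK_nonneg m hA₂.le))
      (intervalIntegral.integral_nonneg ha.le fun r hr => mul_nonneg (sq_nonneg _) hr.1)
  have hq0 : 0 ≤ q := by rw [hq]; positivity
  refine .of_nonneg_of_le (fun _ => abs_nonneg _) (fun m => ?_)
    ((summable_geometric_of_lt_one hq0 hq1).mul_left (exp (2 * Γ * a) * a ^ 2 / 8 * q))
  rw [abs_of_nonneg (hT_nonneg _)]
  calc T (m + 1) ≤ exp (2 * Γ * a) * a ^ 2 / 8 * (q ^ (m + 1) / ((m + 1 : ℕ) : ℝ) ^ 2) :=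
        hbound (m + 1) le_add_self
    _ ≤ exp (2 * Γ * a) * a ^ 2 / 8 * q ^ (m + 1) := by
        gcongr
        exact div_le_self (by positivity) (one_le_pow₀ (by simp))
    _ = exp (2 * Γ * a) * a ^ 2 / 8 * q * q ^ m := by ring
end

section
/- Let (a_n)_{n≥1}, (b_n)_{n≥1} be nonnegative sequences decaying exponentially, and define H(θ) = S_a(θ)C_b(θ) − C_a(θ)S_b(θ) where S_a(θ) = Σ n a_n sin(nθ), C_a(θ) = Σ a_m cos(mθ), similarly for b. Then |H(θ)| ≤ Ξ·sin θ for all θ ∈ [0, π], where Ξ = Σ_{n,m≥1} a_n b_m |n² − m²|. -/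
/-!
Expanding the products of series, `H(θ) = Σ_{n,m} a_n b_m (n sin nθ cos mθ - m cos nθ sin mθ)`,
and by the product-to-sum formulas each bracket equals
`(n - m)/2 · sin ((n + m)θ) + (n + m)/2 · sin ((n - m)θ)`. As `|sin kθ| ≤ |k| |sin θ|` for every
integer `k`, the bracket is bounded by `|n² - m²| sin θ`. Exponential decay makes every series
involved absolutely convergent, which justifies the expansion.
-/

open Real

lemma abs_sin_nat_mul_le (k : ℕ) (x : ℝ) : |sin (k * x)| ≤ k * |sin x| := by
  induction k with
  | zero => simp
  | succ k ih =>
    calc |sin ((k + 1 : ℕ) * x)| = |sin (k * x) * cos x + cos (k * x) * sin x| := by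
          push_cast; rw [add_mul, one_mul, sin_add]
      _ ≤ |sin (k * x)| * |cos x| + |cos (k * x)| * |sin x| := by
          rw [← abs_mul, ← abs_mul]; exact abs_add_le _ _
      _ ≤ |sin (k * x)| * 1 + 1 * |sin x| := by
          gcongr <;> exact abs_cos_le_one _
      _ ≤ (k + 1 : ℕ) * |sin x| := by push_cast; linarith

lemma abs_sin_int_mul_le (k : ℤ) (x : ℝ) : |sin (k * x)| ≤ |(k : ℝ)| * |sin x| := by
  obtain ⟨n, rfl | rfl⟩ := k.eq_nat_or_neg <;>
    simpa [neg_mul, sin_neg] using abs_sin_nat_mul_le n x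

lemma abs_mul_sin_mul_cos_sub_le (N M : ℤ) (x : ℝ) :
    |N * sin (N * x) * cos (M * x) - M * cos (N * x) * sin (M * x)|
      ≤ |(N : ℝ) ^ 2 - (M : ℝ) ^ 2| * |sin x| := by
  set s := (N : ℝ) + M
  set d := (N : ℝ) - M
  have hprod_to_sum : (N : ℝ) * sin (N * x) * cos (M * x) - M * cos (N * x) * sin (M * x)
      = d / 2 * sin (s * x) + s / 2 * sin (d * x) := by
    rw [add_mul, sub_mul, sin_add, sin_sub]
    ring
  have hs : |sin (s * x)| ≤ |s| * |sin x| := by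
    simpa only [s, Int.cast_add] using abs_sin_int_mul_le (N + M) x
  have hd : |sin (d * x)| ≤ |d| * |sin x| := by
    simpa only [d, Int.cast_sub] using abs_sin_int_mul_le (N - M) x
  calc _ = |d / 2 * sin (s * x) + s / 2 * sin (d * x)| := by rw [hprod_to_sum]
    _ ≤ |d| / 2 * |sin (s * x)| + |s| / 2 * |sin (d * x)| := by
        simpa only [abs_mul, abs_div, abs_two] using abs_add_le (d / 2 * sin (s * x)) (s / 2 * sin (d * x))
    _ ≤ |d| / 2 * (|s| * |sin x|) + |s| / 2 * (|d| * |sin x|) := by gcongr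
    _ = |(N : ℝ) ^ 2 - (M : ℝ) ^ 2| * |sin x| := by rw [sq_sub_sq, abs_mul]; ring

lemma abs_mul_mul_sin_mul_cos_sub_le {α β : ℝ} (hα : 0 ≤ α) (hβ : 0 ≤ β) (N M : ℤ) (x : ℝ) :
    |N * α * sin (N * x) * (β * cos (M * x)) - α * cos (N * x) * (M * β * sin (M * x))|
      ≤ α * β * |(N : ℝ) ^ 2 - (M : ℝ) ^ 2| * |sin x| := by
  calc _ = |α * β| * |N * sin (N * x) * cos (M * x) - M * cos (N * x) * sin (M * x)| := by
        rw [← abs_mul]; ring_nf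
    _ ≤ α * β * (|(N : ℝ) ^ 2 - (M : ℝ) ^ 2| * |sin x|) := by
        rw [abs_of_nonneg (mul_nonneg hα hβ)]
        gcongr
        exact abs_mul_sin_mul_cos_sub_le N M x
    _ = _ := by ring

lemma abs_sq_sub_sq_le_sq_mul_sq {x y : ℝ} (hx : 1 ≤ x) (hy : 1 ≤ y) :
    |x ^ 2 - y ^ 2| ≤ x ^ 2 * y ^ 2 := by
  rw [abs_sub_le_iff]
  constructor <;> nlinarith [mul_le_mul hx hx zero_le_one (by linarith),
    mul_le_mul hy hy zero_le_one (by linarith)]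

lemma summable_pow_mul_of_le_exp {f : ℕ → ℝ} {C r : ℝ} (hf0 : ∀ n, 0 ≤ f n) (hr : 0 < r)
    (hf : ∀ n : ℕ, f n ≤ C * exp (-r * n)) (k : ℕ) :
    Summable fun n : ℕ => (n : ℝ) ^ k * f n :=
  ((summable_pow_mul_exp_neg_nat_mul k hr).mul_left C).of_nonneg_of_le
    (fun n => mul_nonneg (by positivity) (hf0 n))
    (fun n => by
      rw [mul_left_comm]
      exact mul_le_mul_of_nonneg_left (hf n) (by positivity))

lemma summable_succ_pow_mul_of_le_exp {f : ℕ → ℝ} {C r : ℝ} (hf0 : ∀ n, 0 ≤ f n) (hr : 0 < r)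
    (hf : ∀ n : ℕ, f n ≤ C * exp (-r * n)) (k : ℕ) :
    Summable fun n : ℕ => ((n : ℝ) + 1) ^ k * f (n + 1) := by
  simpa using (summable_nat_add_iff 1).mpr (summable_pow_mul_of_le_exp hf0 hr hf k)

lemma summable_mul_mul_abs_sq_sub_sq {f g : ℕ → ℝ} (hf0 : ∀ n, 0 ≤ f n) (hg0 : ∀ n, 0 ≤ g n)
    (hf : Summable fun n : ℕ => ((n : ℝ) + 1) ^ 2 * f (n + 1))
    (hg : Summable fun n : ℕ => ((n : ℝ) + 1) ^ 2 * g (n + 1)) :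
    Summable fun p : ℕ × ℕ =>
      f (p.1 + 1) * g (p.2 + 1) * |((p.1 : ℝ) + 1) ^ 2 - ((p.2 : ℝ) + 1) ^ 2| := by
  refine (hf.mul_of_nonneg hg (fun n => by positivity [hf0 (n + 1)])
    (fun n => by positivity [hg0 (n + 1)])).of_nonneg_of_le
    (fun p => by positivity [hf0 (p.1 + 1), hg0 (p.2 + 1)]) (fun p => ?_)
  calc _ ≤ f (p.1 + 1) * g (p.2 + 1) * (((p.1 : ℝ) + 1) ^ 2 * ((p.2 : ℝ) + 1) ^ 2) := by
        gcongr
        · exact mul_nonneg (hf0 _) (hg0 _)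
        · exact abs_sq_sub_sq_le_sq_mul_sq (by simp) (by simp)
    _ = _ := by ring

lemma Summable.norm_mul_of_abs_le_one {ι : Type*} {f g : ι → ℝ} (hf : Summable f)
    (hg : ∀ i, |g i| ≤ 1) : Summable fun i => ‖f i * g i‖ :=
  hf.abs.of_nonneg_of_le (fun _ => norm_nonneg _) fun i => by
    rw [norm_mul, Real.norm_eq_abs]
    exact mul_le_of_le_one_right (abs_nonneg _) (hg i)

lemma norm_tsum_mul_tsum_sub_tsum_mul_tsum_le {ι κ R : Type*} [NormedRing R] [CompleteSpace R]
    {u u' : ι → R} {v v' : κ → R} {G : ι × κ → ℝ}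
    (hu : Summable fun i => ‖u i‖) (hv : Summable fun j => ‖v j‖)
    (hu' : Summable fun i => ‖u' i‖) (hv' : Summable fun j => ‖v' j‖) (hG : Summable G)
    (h : ∀ i j, ‖u i * v j - u' i * v' j‖ ≤ G (i, j)) :
    ‖(∑' i, u i) * (∑' j, v j) - (∑' i, u' i) * (∑' j, v' j)‖ ≤ ∑' p, G p := by
  rw [tsum_mul_tsum_of_summable_norm hu hv, tsum_mul_tsum_of_summable_norm hu' hv',
    ← (summable_mul_of_summable_norm hu hv).tsum_sub (summable_mul_of_summable_norm hu' hv')]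
  exact tsum_of_norm_bounded hG.hasSum fun p => h p.1 p.2

theorem H_bound (a b : ℕ → ℝ)
    (ha_nonneg : ∀ n, 0 ≤ a n) (hb_nonneg : ∀ n, 0 ≤ b n)
    (ha_dec : ∃ Ca ra : ℝ, 0 < Ca ∧ 0 < ra ∧ ∀ n : ℕ, a n ≤ Ca * Real.exp (-ra * n))
    (hb_dec : ∃ Cb rb : ℝ, 0 < Cb ∧ 0 < rb ∧ ∀ n : ℕ, b n ≤ Cb * Real.exp (-rb * n))
    (Sa Sb Ca' Cb' H : ℝ → ℝ)
    (hSa : ∀ θ, Sa θ = ∑' n : ℕ, ((n : ℝ) + 1) * a (n + 1) * Real.sin ((n + 1) * θ))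
    (hSb : ∀ θ, Sb θ = ∑' n : ℕ, ((n : ℝ) + 1) * b (n + 1) * Real.sin ((n + 1) * θ))
    (hCa : ∀ θ, Ca' θ = ∑' m : ℕ, a (m + 1) * Real.cos ((m + 1) * θ))
    (hCb : ∀ θ, Cb' θ = ∑' m : ℕ, b (m + 1) * Real.cos ((m + 1) * θ))
    (hH : ∀ θ, H θ = Sa θ * Cb' θ - Ca' θ * Sb θ)
    (Ξ : ℝ)
    (hΞ : Ξ = ∑' n : ℕ, ∑' m : ℕ,
      a (n + 1) * b (m + 1) * |((n : ℝ) + 1) ^ 2 - ((m : ℝ) + 1) ^ 2|) :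
    ∀ θ ∈ Set.Icc (0 : ℝ) π, |H θ| ≤ Ξ * Real.sin θ := by
  rintro θ ⟨hθ0, hθπ⟩
  obtain ⟨_, ra, -, hra, ha⟩ := ha_dec
  obtain ⟨_, rb, -, hrb, hb⟩ := hb_dec
  have hA := summable_succ_pow_mul_of_le_exp ha_nonneg hra ha
  have hB := summable_succ_pow_mul_of_le_exp hb_nonneg hrb hb
  have hA0 : Summable fun n : ℕ => a (n + 1) := by simpa using hA 0
  have hB0 : Summable fun n : ℕ => b (n + 1) := by simpa using hB 0
  have hA1 : Summable fun n : ℕ => ((n : ℝ) + 1) * a (n + 1) := by simpa using hA 1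
  have hB1 : Summable fun n : ℕ => ((n : ℝ) + 1) * b (n + 1) := by simpa using hB 1
  set G : ℕ × ℕ → ℝ := fun p =>
    a (p.1 + 1) * b (p.2 + 1) * |((p.1 : ℝ) + 1) ^ 2 - ((p.2 : ℝ) + 1) ^ 2|
  have hG : Summable G := summable_mul_mul_abs_sq_sub_sq ha_nonneg hb_nonneg (hA 2) (hB 2)
  have hterm : ∀ n m : ℕ,
      |((n : ℝ) + 1) * a (n + 1) * sin ((n + 1) * θ) * (b (m + 1) * cos ((m + 1) * θ))
        - a (n + 1) * cos ((n + 1) * θ) * (((m : ℝ) + 1) * b (m + 1) * sin ((m + 1) * θ))|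
        ≤ G (n, m) * sin θ := by
    intro n m
    have key := abs_mul_mul_sin_mul_cos_sub_le (ha_nonneg (n + 1)) (hb_nonneg (m + 1))
      (n + 1) (m + 1) θ
    push_cast at key
    rwa [abs_of_nonneg (sin_nonneg_of_nonneg_of_le_pi hθ0 hθπ)] at key
  calc |H θ| ≤ ∑' p, G p * sin θ := by
        rw [hH, hSa, hCb, hCa, hSb]
        exact norm_tsum_mul_tsum_sub_tsum_mul_tsum_le
          (hA1.norm_mul_of_abs_le_one fun _ => abs_sin_le_one _)
          (hB0.norm_mul_of_abs_le_one fun _ => abs_cos_le_one _)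
          (hA0.norm_mul_of_abs_le_one fun _ => abs_cos_le_one _)
          (hB1.norm_mul_of_abs_le_one fun _ => abs_sin_le_one _)
          (hG.mul_right _) hterm
    _ = Ξ * sin θ := by rw [tsum_mul_right, hG.tsum_prod, hΞ]
end

section
/- Let S, K be Hermitian complex N×N matrices partitioned with index set {1,…,N} = H ∪ {+, −}, satisfying the symmetry relations S_{i,+} = S_{i,−} and K_{i,+} = K_{i,−} for all i ∈ H, together with S_{+,+} = S_{−,−}, K_{+,+} = K_{−,−}, S_{+,−} = S_{−,+}, K_{+,−} = K_{−,+}, and S_{+,+} ≠ S_{+,−}. Define β := (K_{+,+} − K_{+,−})/(S_{+,+} − S_{+,−}). Then for any α ∈ ℂ, the vector C(z) with C_+(z) = α e^{iβz}, C_−(z) = −α e^{iβz}, and C_i(z) = 0 for i ∈ H, solves the system i S C'(z) + K C(z) = 0 for all z ≥ 0. -/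
/-!
Because every matrix `M ∈ {S, K}` is invariant under swapping `+` and `−`, the antisymmetric
vector `v = e₊ - e₋` is a common eigenvector: `M v = (M₊₊ - M₊₋) v`, the `H`-rows cancelling
pairwise. Hence `K v = β S v`, and the plane wave `C(z) = α e^{iβz} v` satisfies
`i S C' + K C = α e^{iβz} (-β S v + K v) = 0`.
-/

open Matrix Complex

section MirrorSymmetry

variable {ι R : Type*} [Fintype ι] [DecidableEq ι] [CommRing R]

theorem Matrix.mulVec_single_one_sub_single_one (M : Matrix ι ι R) (p m : ι) :
    M *ᵥ (Pi.single p 1 - Pi.single m 1) = fun i => M i p - M i m := by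
  ext i
  simp [mulVec_sub]

theorem Matrix.mulVec_antisymm_of_mirror (M : Matrix ι ι R) {p m : ι} (hpm : p ≠ m)
    (hrow : ∀ i, i ≠ p → i ≠ m → M i p = M i m)
    (hdiag : M p p = M m m) (hoff : M p m = M m p) :
    M *ᵥ (Pi.single p 1 - Pi.single m 1) =
      (M p p - M p m) • (Pi.single p 1 - Pi.single m 1) := by
  rw [mulVec_single_one_sub_single_one]
  ext i
  by_cases hip : i = p
  · subst hip
    simp [hpm]
  · by_cases him : i = m
    · subst him
      simp [hip, ← hdiag, ← hoff]
    · simp [hip, him, hrow i hip him]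

end MirrorSymmetry

theorem deriv_mul_cexp_I_mul (c β : ℂ) (z : ℝ) :
    deriv (fun w : ℝ => c * cexp (I * β * w)) z = I * β * (c * cexp (I * β * z)) := by
  have hphase : HasDerivAt (fun w : ℝ => I * β * (w : ℂ)) (I * β) z := by
    simpa using (hasDerivAt_id z).ofReal_comp.const_mul (I * β)
  rw [(hphase.cexp.const_mul c).deriv]
  ring

theorem plane_wave_solves_of_eigenvector {ι : Type*} [Fintype ι]
    (S K : Matrix ι ι ℂ) (v : ι → ℂ) {σ κ β : ℂ}
    (hSv : S *ᵥ v = σ • v) (hKv : K *ᵥ v = κ • v) (hβ : β * σ = κ) (α : ℂ) (z : ℝ) :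
    I • S *ᵥ (fun i => deriv (fun w : ℝ => α * cexp (I * β * w) * v i) z) +
      K *ᵥ ((α * cexp (I * β * z)) • v) = 0 := by
  have hderiv : (fun i => deriv (fun w : ℝ => α * cexp (I * β * w) * v i) z) =
      (I * β * (α * cexp (I * β * z))) • v := by
    ext i
    rw [deriv_mul_const_field, deriv_mul_cexp_I_mul, Pi.smul_apply, smul_eq_mul]
  rw [hderiv, mulVec_smul, mulVec_smul, hSv, hKv, ← hβ, smul_smul, smul_smul, smul_smul,
    ← add_smul]
  convert zero_smul ℂ v using 2
  linear_combination (β * σ * (α * cexp (I * β * z))) * I_mul_I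

theorem BIC_mode_general (ι : Type*) [Fintype ι] [DecidableEq ι]
    (S K : Matrix ι ι ℂ)
    (plus minus : ι) (hpm : plus ≠ minus)
    (hSrow : ∀ i, i ≠ plus → i ≠ minus → S i plus = S i minus)
    (hKrow : ∀ i, i ≠ plus → i ≠ minus → K i plus = K i minus)
    (hSdiag : S plus plus = S minus minus) (hKdiag : K plus plus = K minus minus)
    (hSoff : S plus minus = S minus plus) (hKoff : K plus minus = K minus plus)
    (hSne : S plus plus ≠ S plus minus)
    (β : ℂ) (hβ : β = (K plus plus - K plus minus) / (S plus plus - S plus minus))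
    (α : ℂ) (C : ℝ → ι → ℂ)
    (hC : ∀ z i, C z i =
      if i = plus then α * Complex.exp (Complex.I * β * z)
      else if i = minus then -α * Complex.exp (Complex.I * β * z) else 0) :
    ∀ z : ℝ, 0 ≤ z →
      Complex.I • S.mulVec (fun i => deriv (fun w : ℝ => C w i) z) +
        K.mulVec (C z) = 0 := by
  intro z _
  have hC_eq : ∀ w, C w = (α * cexp (I * β * w)) • (Pi.single plus 1 - Pi.single minus 1) := by
    intro w
    ext i
    rw [hC]
    by_cases hip : i = plus
    · simp [hip, hpm]
    · by_cases him : i = minus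
      · simp [him, hpm.symm]
      · simp [hip, him]
  have hβσ : β * (S plus plus - S plus minus) = K plus plus - K plus minus := by
    rw [hβ, div_mul_cancel₀ _ (sub_ne_zero.mpr hSne)]
  simp_rw [hC_eq, Pi.smul_apply, smul_eq_mul]
  exact plane_wave_solves_of_eigenvector S K _
    (S.mulVec_antisymm_of_mirror hpm hSrow hSdiag hSoff)
    (K.mulVec_antisymm_of_mirror hpm hKrow hKdiag hKoff) hβσ α z

theorem BIC_mode (ι : Type*) [Fintype ι] [DecidableEq ι]
    (S K : Matrix ι ι ℂ) (hS : S.IsHermitian) (hK : K.IsHermitian)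
    (plus minus : ι) (hpm : plus ≠ minus)
    (hSrow : ∀ i, i ≠ plus → i ≠ minus → S i plus = S i minus)
    (hKrow : ∀ i, i ≠ plus → i ≠ minus → K i plus = K i minus)
    (hSdiag : S plus plus = S minus minus) (hKdiag : K plus plus = K minus minus)
    (hSoff : S plus minus = S minus plus) (hKoff : K plus minus = K minus plus)
    (hSne : S plus plus ≠ S plus minus)
    (β : ℂ) (hβ : β = (K plus plus - K plus minus) / (S plus plus - S plus minus))
    (α : ℂ) (C : ℝ → ι → ℂ)
    (hC : ∀ z i, C z i =
      if i = plus then α * Complex.exp (Complex.I * β * z)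
      else if i = minus then -α * Complex.exp (Complex.I * β * z) else 0) :
    ∀ z : ℝ, 0 ≤ z →
      Complex.I • S.mulVec (fun i => deriv (fun w : ℝ => C w i) z) +
        K.mulVec (C z) = 0 :=
  BIC_mode_general ι S K plus minus hpm hSrow hKrow hSdiag hKdiag hSoff hKoff hSne β hβ α C hC
end
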